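/- arXiv:2512.22907 — 3 statements merged into one kernel-verified Lean document; each statement's English description precedes it below -/
import Mathlib

section
/- Let X₁, …, X_{2d} ⊆ ℝ^d with pos X_i = ℝ^d for each i. Then there exist points x_i ∈ X_i (i = 1, …, 2d) such that pos {x₁, …, x_{2d}} = ℝ^d. -/
open scoped BigOperators

/-- The positive (conic) hull of a set: all finite nonnegative linear combinations. -/
def posHull {d : ℕ} (A : Set (EuclideanSpace ℝ (Fin d))) : Set (EuclideanSpace ℝ (Fin d)) :=
  {x | ∃ (n : ℕ) (c : Fin n → ℝ) (f : Fin n → EuclideanSpace ℝ (Fin d)),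
    (∀ i, 0 ≤ c i) ∧ (∀ i, f i ∈ A) ∧ x = ∑ i, c i • f i}

/-!
Pick a linearly independent transversal `b` of the first `d` sets greedily. The cone generated
by `b` together with `-∑ b` is all of `ℝ^d`, so it suffices to find a transversal of the last
`d` sets whose cone contains `v = -∑ b ≠ 0`. This is the conic colourful Carathéodory theorem
of Bárány: among all transversals and linearly independent subfamilies of them, take one whose
(closed, simplicial) cone is nearest to `v`. If the nearest point `p` is not `v`, then `u = v - p`
is orthogonal to the face of that cone containing `p`, which is spanned by fewer than `d` of the
points; replacing the point of a colour outside that face by a point of the same colour with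
`⟪u, a⟫ > 0` gives a strictly nearer simplicial cone.
-/

open Module PointedCone Set Submodule Function

theorem posHull_eq_hull {d : ℕ} (A : Set (EuclideanSpace ℝ (Fin d))) : posHull A = hull ℝ A := by
  ext w
  simp only [posHull, mem_ofPred_eq, SetLike.mem_coe, mem_span_set']
  constructor
  · rintro ⟨n, c, f, hc, hf, rfl⟩
    exact ⟨n, fun i ↦ ⟨c i, hc i⟩, fun i ↦ ⟨f i, hf i⟩, rfl⟩
  · rintro ⟨n, c, f, rfl⟩
    exact ⟨n, fun i ↦ c i, fun i ↦ f i, fun i ↦ (c i).2, fun i ↦ (f i).2, rfl⟩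

theorem PointedCone.hull_eq_top_of_neg_sum_mem {R E : Type*} [Ring R] [LinearOrder R]
    [IsOrderedRing R] [AddCommGroup E] [Module R E] {ι : Type*} [Fintype ι] {b : ι → E}
    {s : Set E} (hb : span R (range b) = ⊤) (hbs : range b ⊆ s) (hneg : -∑ i, b i ∈ hull R s) :
    hull R s = ⊤ := by
  classical
  have hlineal : ∀ i, b i ∈ (hull R s).lineal := fun i ↦ by
    refine mem_lineal.2 ⟨subset_hull (hbs ⟨i, rfl⟩), ?_⟩
    have : -b i = -∑ j, b j + ∑ j ∈ Finset.univ.erase i, b j := by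
      rw [← Finset.add_sum_erase _ _ (Finset.mem_univ i)]; abel
    exact this ▸ add_mem hneg (sum_mem fun j _ ↦ subset_hull (hbs ⟨j, rfl⟩))
  refine eq_top_iff.2 fun w _ ↦ lineal_le _ ?_
  exact span_le.2 (range_subset_iff.2 hlineal) (hb ▸ mem_top : w ∈ span R (range b))

theorem exists_linearIndependent_transversal {K V : Type*} [DivisionRing K] [AddCommGroup V]
    [Module K V] : ∀ {k : ℕ} (Y : Fin k → Set V), k ≤ finrank K V → (∀ i, span K (Y i) = ⊤) →
      ∃ b : Fin k → V, (∀ i, b i ∈ Y i) ∧ LinearIndependent K b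
  | 0, _, _, _ => ⟨Fin.elim0, Fin.rec0, linearIndependent_empty_type⟩
  | k + 1, Y, hk, hY => by
    obtain ⟨b, hbY, hb⟩ :=
      exists_linearIndependent_transversal (Y ∘ Fin.castSucc) (by omega) fun i ↦ hY _
    have hspan : span K (range b) ≠ ⊤ := fun h ↦ by
      have := finrank_range_le_card (R := K) b
      rw [Set.finrank, h, finrank_top, Fintype.card_fin] at this
      omega
    obtain ⟨z, hzY, hz⟩ : ∃ z ∈ Y (Fin.last k), z ∉ span K (range b) := by
      by_contra! h
      exact hspan (eq_top_iff.2 ((hY _).ge.trans (span_le.2 h)))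
    refine ⟨Fin.snoc b z, Fin.lastCases ?_ fun i ↦ ?_, linearIndependent_finSnoc.2 ⟨hb, hz⟩⟩
    · simpa using hzY
    · simpa using hbY i

theorem Set.eqOn_update_of_notMem {ι β : Type*} [DecidableEq ι] (f : ι → β) (b : β) {s : Set ι}
    {j : ι} (hj : j ∉ s) : EqOn (update f j b) f s :=
  fun _ hi ↦ update_of_ne (ne_of_mem_of_not_mem hi hj) _ _

section InnerProductSpace

variable {E : Type*} [NormedAddCommGroup E] [InnerProductSpace ℝ E]

open scoped RealInnerProductSpace

theorem LinearIndependent.isClosed_hull_range {ι : Type*} [Finite ι] {x : ι → E}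
    (hx : LinearIndependent ℝ x) : IsClosed (hull ℝ (range x) : Set E) := by
  have := Fintype.ofFinite ι
  have hcone : (hull ℝ (range x) : Set E) = Fintype.linearCombination ℝ x '' Ici 0 := by
    ext w
    simp only [SetLike.mem_coe, mem_span_range_iff_exists_fun]
    constructor
    · rintro ⟨c, rfl⟩
      exact ⟨fun i ↦ c i, fun i ↦ (c i).2, by simp [Fintype.linearCombination_apply]⟩
    · rintro ⟨c, hc, rfl⟩
      exact ⟨fun i ↦ ⟨c i, hc i⟩, by simp [Fintype.linearCombination_apply]⟩
  rw [hcone]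
  exact (LinearMap.isClosedEmbedding_of_injective (LinearMap.ker_eq_bot.2
    hx.fintypeLinearCombination_injective)).isClosedMap _ isClosed_Ici

theorem inner_nonpos_of_mem_hull {s : Set E} {u w : E} (hs : ∀ a ∈ s, ⟪u, a⟫ ≤ 0)
    (hw : w ∈ hull ℝ s) : ⟪u, w⟫ ≤ 0 := by
  have hdual : -u ∈ dual (innerₗ E) (hull ℝ s) := by
    rw [dual_hull]
    intro a ha
    simpa [real_inner_comm] using hs a ha
  simpa [real_inner_comm] using hdual hw

theorem exists_inner_pos_of_mem_hull {s : Set E} {u v : E} (hv : v ∈ hull ℝ s)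
    (huv : 0 < ⟪u, v⟫) : ∃ a ∈ s, 0 < ⟪u, a⟫ := by
  by_contra! h
  exact huv.not_ge (inner_nonpos_of_mem_hull h hv)

theorem mem_hull_inter_of_inner_eq_zero {s : Set E} {u p : E} (hs : ∀ a ∈ s, ⟪u, a⟫ ≤ 0)
    (hp : p ∈ hull ℝ s) (hup : ⟪u, p⟫ = 0) : p ∈ hull ℝ (s ∩ {a | ⟪u, a⟫ = 0}) := by
  induction hp using Submodule.span_induction with
  | mem a ha => exact subset_hull ⟨ha, hup⟩
  | zero => exact zero_mem _
  | add x y hx hy ihx ihy =>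
    rw [inner_add_right] at hup
    have := inner_nonpos_of_mem_hull hs hx
    have := inner_nonpos_of_mem_hull hs hy
    exact add_mem (ihx (by linarith)) (ihy (by linarith))
  | smul c x _ ihx =>
    rcases eq_or_ne c 0 with rfl | hc
    · rw [zero_smul]
      exact zero_mem _
    · rw [show c • x = (c : ℝ) • x from rfl, real_inner_smul_right] at hup
      have hx : ⟪u, x⟫ = 0 := (mul_eq_zero.1 hup).resolve_left fun h ↦ hc (Subtype.ext h)
      exact Submodule.smul_mem _ c (ihx hx)

theorem PointedCone.inner_eq_zero_and_nonpos_of_norm_eq_iInf {K : PointedCone ℝ E} {v p : E}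
    (hp : p ∈ K) (h : ‖v - p‖ = ⨅ w : (K : Set E), ‖v - w‖) :
    ⟪v - p, p⟫ = 0 ∧ ∀ w ∈ K, ⟪v - p, w⟫ ≤ 0 := by
  have hobtuse := (norm_eq_iInf_iff_real_inner_le_zero K.convex hp).1 h
  have h₀ := hobtuse 0 K.zero_mem
  have h₂ := hobtuse (p + p) (add_mem hp hp)
  rw [zero_sub, inner_neg_right] at h₀
  rw [add_sub_cancel_right] at h₂
  refine ⟨by linarith, fun w hw ↦ ?_⟩
  simpa using hobtuse (p + w) (add_mem hp hw)

theorem exists_nonneg_norm_sub_smul_lt {u a : E} (h : 0 < ⟪u, a⟫) :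
    ∃ τ : ℝ, 0 ≤ τ ∧ ‖u - τ • a‖ < ‖u‖ := by
  have ha : 0 < ‖a‖ ^ 2 := by
    have : a ≠ 0 := by rintro rfl; simp at h
    positivity
  -- the minimiser of `τ ↦ ‖u - τ • a‖`
  refine ⟨⟪u, a⟫ / ‖a‖ ^ 2, by positivity, ?_⟩
  have hsq : ‖u - (⟪u, a⟫ / ‖a‖ ^ 2) • a‖ ^ 2 = ‖u‖ ^ 2 - ⟪u, a⟫ ^ 2 / ‖a‖ ^ 2 := by
    rw [norm_sub_sq_real, real_inner_smul_right, norm_smul, mul_pow, Real.norm_eq_abs, sq_abs]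
    field_simp
    ring
  refine (pow_lt_pow_iff_left₀ (norm_nonneg _) (norm_nonneg _) two_ne_zero).1 ?_
  rw [hsq]
  have : 0 < ⟪u, a⟫ ^ 2 / ‖a‖ ^ 2 := by positivity
  linarith

theorem LinearIndepOn.insert_update_of_inner_eq_zero {ι : Type*} [DecidableEq ι] {x : ι → E}
    {s : Set ι} (hs : LinearIndepOn ℝ x s) {u : E} (hxu : ∀ j ∈ s, ⟪u, x j⟫ = 0) {j₀ : ι}
    (hj₀ : j₀ ∉ s) {a : E} (ha : ⟪u, a⟫ ≠ 0) : LinearIndepOn ℝ (update x j₀ a) (insert j₀ s) := by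
  have heq := eqOn_update_of_notMem x a hj₀
  rw [linearIndepOn_insert hj₀, heq.image_eq, update_self]
  refine ⟨hs.congr heq.symm, fun ha' ↦ ha ?_⟩
  have hperp : span ℝ (x '' s) ≤ (ℝ ∙ u)ᗮ := span_le.2 <| by
    rintro _ ⟨j, hj, rfl⟩
    exact mem_orthogonal_singleton_iff_inner_right.2 (hxu j hj)
  exact mem_orthogonal_singleton_iff_inner_right.1 (hperp ha')

variable [FiniteDimensional ℝ E] {ι : Type*} [Fintype ι]

theorem LinearIndepOn.exists_notMem_of_inner_eq_zero (hd : finrank ℝ E ≤ Fintype.card ι)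
    {x : ι → E} {s : Set ι} (hs : LinearIndepOn ℝ x s) {u : E} (hu : u ≠ 0)
    (hxu : ∀ j ∈ s, ⟪u, x j⟫ = 0) : ∃ j, j ∉ s := by
  by_contra! h
  have hx : LinearIndependent ℝ x := linearIndepOn_univ_iff.1 (eq_univ_of_forall h ▸ hs)
  have hspan := hx.span_eq_top_of_card_eq_finrank' (hx.fintype_card_le_finrank.antisymm hd)
  have hperp : span ℝ (range x) ≤ (ℝ ∙ u)ᗮ := span_le.2 <| range_subset_iff.2 fun j ↦
    mem_orthogonal_singleton_iff_inner_right.2 (hxu j (h j))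
  rw [hspan, top_le_iff] at hperp
  have : u ∈ (ℝ ∙ u)ᗮ := hperp ▸ mem_top
  exact hu (inner_self_eq_zero.1 (mem_orthogonal_singleton_iff_inner_right.1 this))

theorem exists_update_closer [DecidableEq ι] (hd : finrank ℝ E ≤ Fintype.card ι)
    {Y : ι → Set E} {v : E} (hY : ∀ j, v ∈ hull ℝ (Y j)) {x : ι → E} {s : Set ι}
    (hs : LinearIndepOn ℝ x s) {p : E} (hp : p ∈ hull ℝ (x '' s))
    (hnear : ‖v - p‖ = ⨅ w : (hull ℝ (x '' s) : Set E), ‖v - w‖) (hvp : v ≠ p) :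
    ∃ j, ∃ a ∈ Y j, ∃ t : Set ι, LinearIndepOn ℝ (update x j a) t ∧
      ∃ q ∈ hull ℝ (update x j a '' t), ‖v - q‖ < ‖v - p‖ := by
  set u := v - p
  obtain ⟨hup, hnonpos⟩ := inner_eq_zero_and_nonpos_of_norm_eq_iInf hp hnear
  -- the face of the cone exposed by `u`; it still contains `p`
  set t := s ∩ x ⁻¹' {w | ⟪u, w⟫ = 0}
  have ht : LinearIndepOn ℝ x t := hs.mono inter_subset_left
  have hpt : p ∈ hull ℝ (x '' t) := by
    rw [image_inter_preimage]
    refine mem_hull_inter_of_inner_eq_zero ?_ hp hup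
    exact fun _ hw ↦ hnonpos _ (subset_hull hw)
  obtain ⟨j₀, hj₀⟩ := ht.exists_notMem_of_inner_eq_zero hd (sub_ne_zero.2 hvp) fun j hj ↦ hj.2
  have huv : 0 < ⟪u, v⟫ := by
    rw [← add_sub_cancel p v, inner_add_right, hup, zero_add, real_inner_self_eq_norm_sq]
    exact pow_pos (norm_pos_iff.2 (sub_ne_zero.2 hvp)) 2
  obtain ⟨a, haY, hua⟩ := exists_inner_pos_of_mem_hull (hY j₀) huv
  obtain ⟨τ, hτ, hτu⟩ := exists_nonneg_norm_sub_smul_lt hua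
  refine ⟨j₀, a, haY, insert j₀ t,
    ht.insert_update_of_inner_eq_zero (fun j hj ↦ hj.2) hj₀ hua.ne', p + τ • a, ?_,
    by rwa [← sub_sub]⟩
  rw [image_insert_eq, update_self, (eqOn_update_of_notMem x a hj₀).image_eq]
  exact add_mem (span_mono (subset_insert _ _) hpt)
    (smul_mem _ hτ (subset_hull (mem_insert _ _)))

theorem exists_transversal_mem_hull_of_finset (hd : finrank ℝ E ≤ Fintype.card ι)
    {Y : ι → Finset E} {v : E} (hv : v ≠ 0) (hY : ∀ j, v ∈ hull ℝ (Y j : Set E)) :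
    ∃ y : ι → E, (∀ j, y j ∈ Y j) ∧ v ∈ hull ℝ (range y) := by
  classical
  have hne : ∀ j, Nonempty (Y j) := fun j ↦ by
    rcases (Y j).eq_empty_or_nonempty with h | h
    · exact absurd (by simpa [h] using hY j) hv
    · exact h.to_subtype
  let Config := {c : (∀ j, Y j) × Set ι // LinearIndepOn ℝ (fun j ↦ (c.1 j : E)) c.2}
  let K (c : Config) : PointedCone ℝ E := hull ℝ ((fun j ↦ (c.1.1 j : E)) '' c.1.2)
  have hK (c : Config) : IsClosed (K c : Set E) := by
    simp only [K, image_eq_range]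
    exact c.2.isClosed_hull_range
  choose p hpK hp using fun c ↦
    exists_norm_eq_iInf_of_complete_convex ⟨0, (K c).zero_mem⟩ (hK c).isComplete (K c).convex v
  have : Nonempty Config := ⟨⟨(fun _ ↦ Classical.arbitrary _, ∅), linearIndepOn_empty _ _⟩⟩
  obtain ⟨c₀, hc₀⟩ := Finite.exists_min fun c ↦ ‖v - p c‖
  by_cases hvp : v = p c₀
  · exact ⟨fun j ↦ c₀.1.1 j, fun j ↦ (c₀.1.1 j).2,
      hvp ▸ span_mono (image_subset_range _ _) (hpK c₀)⟩
  obtain ⟨j, a, ha, t, ht, q, hq, hqv⟩ := exists_update_closer hd hY c₀.2 (hpK c₀) (hp c₀) hvp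
  have hupdate :
      (fun i ↦ (update c₀.1.1 j ⟨a, ha⟩ i : E)) = update (fun i ↦ (c₀.1.1 i : E)) j a :=
    funext fun i ↦ apply_update (fun _ ↦ Subtype.val) _ _ _ i
  let c₁ : Config := ⟨(update c₀.1.1 j ⟨a, ha⟩, t), hupdate ▸ ht⟩
  have hq₁ : q ∈ K c₁ := by simpa only [K, c₁, hupdate] using hq
  have hbdd : BddBelow (range fun w : (K c₁ : Set E) ↦ ‖v - w‖) :=
    ⟨0, forall_mem_range.2 fun _ ↦ norm_nonneg _⟩
  have hmin := hc₀ c₁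
  have hnear : ‖v - p c₁‖ ≤ ‖v - q‖ := (hp c₁).trans_le (ciInf_le hbdd ⟨q, hq₁⟩)
  linarith

theorem exists_transversal_mem_hull (hd : finrank ℝ E ≤ Fintype.card ι) {Y : ι → Set E} {v : E}
    (hv : v ≠ 0) (hY : ∀ j, v ∈ hull ℝ (Y j)) :
    ∃ y : ι → E, (∀ j, y j ∈ Y j) ∧ v ∈ hull ℝ (range y) := by
  choose T hTY hvT using fun j ↦ mem_span_finite_of_mem_span (hY j)
  obtain ⟨y, hyT, hy⟩ := exists_transversal_mem_hull_of_finset hd hv hvT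
  exact ⟨y, fun j ↦ hTY j (hyT j), hy⟩

theorem exists_transversal_hull_eq_top [Nontrivial E] {k : ℕ} (hk : finrank ℝ E = k)
    {κ : Type*} [Fintype κ] (hκ : k ≤ Fintype.card κ) (X : Fin k ⊕ κ → Set E)
    (hX : ∀ i, hull ℝ (X i) = ⊤) :
    ∃ x : Fin k ⊕ κ → E, (∀ i, x i ∈ X i) ∧ hull ℝ (range x) = ⊤ := by
  have hspanX (i) : span ℝ (X i) = ⊤ := eq_top_iff.2 fun w _ ↦ hull_le_span ℝ _ (hX i ▸ mem_top)
  obtain ⟨b, hbX, hb⟩ :=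
    exists_linearIndependent_transversal (X ∘ Sum.inl) hk.ge fun i ↦ hspanX _
  have hbspan := hb.span_eq_top_of_card_eq_finrank' (by simp [hk])
  have hsum : -∑ i, b i ≠ 0 := by
    have : 0 < k := hk ▸ finrank_pos
    rw [neg_ne_zero]
    intro h
    have h1 := Fintype.linearIndependent_iff.1 hb (fun _ ↦ 1) (by simpa using h)
    simpa using h1 ⟨0, this⟩
  obtain ⟨y, hyX, hy⟩ := exists_transversal_mem_hull (hk ▸ hκ) hsum (Y := X ∘ Sum.inr)
    fun j ↦ by simp [hX]
  refine ⟨Sum.elim b y, Sum.forall.2 ⟨hbX, hyX⟩, hull_eq_top_of_neg_sum_mem hbspan ?_ ?_⟩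
  · exact Sum.elim_range b y ▸ subset_union_left
  · exact span_mono (Sum.elim_range b y ▸ subset_union_right) hy

end InnerProductSpace

theorem colourful_steinitz (d : ℕ) (X : Fin (2 * d) → Set (EuclideanSpace ℝ (Fin d)))
    (hX : ∀ i, posHull (X i) = Set.univ) :
    ∃ x : Fin (2 * d) → EuclideanSpace ℝ (Fin d),
      (∀ i, x i ∈ X i) ∧ posHull (Set.range x) = Set.univ := by
  simp only [posHull_eq_hull, coe_eq_univ] at hX ⊢
  rcases eq_or_ne d 0 with rfl | hd
  · exact ⟨0, fun i ↦ i.elim0, Subsingleton.elim _ _⟩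
  have : NeZero d := ⟨hd⟩
  let e : Fin d ⊕ Fin d ≃ Fin (2 * d) := finSumFinEquiv.trans (finCongr (two_mul d).symm)
  obtain ⟨x, hxX, hx⟩ := exists_transversal_hull_eq_top finrank_euclideanSpace_fin
    (Fintype.card_fin d).ge (X ∘ e) fun i ↦ hX _
  exact ⟨x ∘ e.symm, fun i ↦ by simpa using hxX (e.symm i), by rwa [e.symm.surjective.range_comp]⟩
end

section
/- In the Basis Case (X_i = {±e₁,…,±e_d} for every i ∈ [2d], with e₁,…,e_d a basis of ℝ^d), the number of transversals T = (x₁,…,x_{2d}), x_i ∈ X_i, with pos {x₁,…,x_{2d}} = ℝ^d equals (2d)!. -/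
/-!
A transversal `x` of the Basis Case has `pos {x i} = ℝ^d` only if every vector `±e j` occurs
among the `x i`: if `s • e j` is missing, the functional `s • e j^*` is nonpositive on all the
`x i` and positive at `s • e j`, so it separates. The converse holds because `±e j` span `ℝ^d`
positively. Hence the good transversals are the maps from the `2d` indices onto the `2d`
distinct vectors `±e j`, i.e. bijections, and there are `(2d)!` of them.
-/

open scoped BigOperators

/-- `B` is a positive basis of the set `L` (typically a linear subspace). -/
def IsPosBasisOf {d : ℕ} (B L : Set (EuclideanSpace ℝ (Fin d))) : Prop :=
  posHull B = L ∧ ∀ b ∈ B, posHull (B \ {b}) ≠ L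

section posHull

variable {d : ℕ} {A : Set (EuclideanSpace ℝ (Fin d))}

theorem sum_smul_mem_posHull {ι : Type*} [Fintype ι] {c : ι → ℝ}
    {f : ι → EuclideanSpace ℝ (Fin d)} (hc : ∀ i, 0 ≤ c i) (hf : ∀ i, f i ∈ A) :
    ∑ i, c i • f i ∈ posHull A := by
  let σ := Fintype.equivFin ι
  exact ⟨_, c ∘ σ.symm, f ∘ σ.symm, fun _ ↦ hc _, fun _ ↦ hf _,
    (σ.symm.sum_comp fun i ↦ c i • f i).symm⟩

theorem notMem_posHull_of_pos {φ : EuclideanSpace ℝ (Fin d) →ₗ[ℝ] ℝ}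
    (hA : ∀ a ∈ A, φ a ≤ 0) {p : EuclideanSpace ℝ (Fin d)} (hp : 0 < φ p) :
    p ∉ posHull A := by
  rintro ⟨n, c, f, hc, hf, rfl⟩
  rw [map_sum] at hp
  refine hp.not_ge (Finset.sum_nonpos fun i _ ↦ ?_)
  rw [map_smul, smul_eq_mul]
  exact mul_nonpos_of_nonneg_of_nonpos (hc i) (hA _ (hf i))

end posHull

section SignedBasis

variable {ι M : Type*} [AddCommGroup M] [Module ℝ M] (b : Module.Basis ι ℝ M)

noncomputable def Module.Basis.signed : ι ⊕ ι → M := Sum.elim b (-b)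

noncomputable def Module.Basis.signedCoord : ι ⊕ ι → (M →ₗ[ℝ] ℝ) :=
  Sum.elim b.coord (-b.coord)

theorem Module.Basis.range_signed : Set.range b.signed = Set.range b ∪ -Set.range b := by
  rw [signed, Set.Sum.elim_range]
  congr 1
  ext v
  simp [neg_eq_iff_eq_neg]

theorem Module.Basis.signedCoord_signed_self (s : ι ⊕ ι) :
    b.signedCoord s (b.signed s) = 1 := by
  rcases s with i | i <;> simp [signed, signedCoord]

theorem Module.Basis.signedCoord_signed_nonpos {s t : ι ⊕ ι} (hst : t ≠ s) :
    b.signedCoord s (b.signed t) ≤ 0 := by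
  classical
  rcases s with i | i <;> rcases t with j | j <;>
    simp [signed, signedCoord, Finsupp.single_apply, apply_ite] at hst ⊢ <;> grind

theorem Module.Basis.signed_injective : Function.Injective b.signed := by
  intro s t hst
  by_contra hne
  have := b.signedCoord_signed_nonpos (Ne.symm hne)
  rw [← hst, b.signedCoord_signed_self] at this
  exact one_pos.not_ge this

end SignedBasis

section BasisCase

variable {d : ℕ} {ι : Type*} (b : Module.Basis ι ℝ (EuclideanSpace ℝ (Fin d)))

theorem Module.Basis.posHull_range_signed [Fintype ι] :
    posHull (Set.range b.signed) = Set.univ := by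
  refine Set.eq_univ_of_forall fun v ↦ ?_
  -- `b.repr v i • b i = |b.repr v i| • (±b i)`, with the sign of the coordinate
  let s : ι → ι ⊕ ι := fun i ↦ if 0 ≤ b.repr v i then .inl i else .inr i
  have hv : v = ∑ i, |b.repr v i| • b.signed (s i) := by
    conv_lhs => rw [← b.sum_repr v]
    refine Finset.sum_congr rfl fun i _ ↦ ?_
    by_cases h : 0 ≤ b.repr v i
    · simp [s, h, signed, abs_of_nonneg h]
    · simp [s, h, signed, abs_of_neg (not_le.mp h)]
  rw [hv]
  exact sum_smul_mem_posHull (fun _ ↦ abs_nonneg _) fun i ↦ Set.mem_range_self _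

theorem Module.Basis.posHull_eq_univ_iff [Fintype ι] {A : Set (EuclideanSpace ℝ (Fin d))}
    (hA : A ⊆ Set.range b.signed) : posHull A = Set.univ ↔ A = Set.range b.signed := by
  refine ⟨fun h ↦ hA.antisymm ?_, fun h ↦ h ▸ b.posHull_range_signed⟩
  rintro _ ⟨s, rfl⟩
  by_contra hs
  refine notMem_posHull_of_pos (φ := b.signedCoord s) ?_ ?_ (h ▸ Set.mem_univ (b.signed s))
  · rintro a ha
    obtain ⟨t, rfl⟩ := hA ha
    exact b.signedCoord_signed_nonpos fun hts ↦ hs (hts ▸ ha)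
  · simp [b.signedCoord_signed_self]

end BasisCase

theorem ncard_setOf_range_eq {ι κ α : Type*} [Fintype ι] [Fintype κ] {v : κ → α}
    (hv : Function.Injective v) (hcard : Fintype.card ι = Fintype.card κ) :
    {x : ι → α | Set.range x = Set.range v}.ncard = (Fintype.card ι).factorial := by
  classical
  have hcomp : Function.Injective fun σ : ι ≃ κ ↦ v ∘ σ :=
    fun σ τ h ↦ Equiv.ext fun i ↦ hv (congrFun h i)
  have himage :
      (fun σ : ι ≃ κ ↦ v ∘ σ) '' Set.univ = {x | Set.range x = Set.range v} := by
    ext x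
    refine ⟨?_, fun hx ↦ ?_⟩
    · rintro ⟨σ, -, rfl⟩
      exact σ.surjective.range_comp v
    · choose g hg using fun i ↦ hx.le (Set.mem_range_self i)
      have hg_surj : Function.Surjective g := fun k ↦ by
        obtain ⟨i, hi⟩ := hx.ge (Set.mem_range_self k)
        exact ⟨i, hv ((hg i).trans hi)⟩
      have hg_bij : Function.Bijective g :=
        (Fintype.bijective_iff_surjective_and_card g).2 ⟨hg_surj, hcard⟩
      exact ⟨Equiv.ofBijective g hg_bij, Set.mem_univ _, funext hg⟩
  rw [← himage, Set.ncard_image_of_injective _ hcomp, Set.ncard_univ, Nat.card_eq_fintype_card,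
    Fintype.card_equiv (Fintype.equivOfCardEq hcard)]

theorem bcase_count (d : ℕ) (e : Fin d → EuclideanSpace ℝ (Fin d))
    (he : LinearIndependent ℝ e) (hspan : Submodule.span ℝ (Set.range e) = ⊤)
    (X : Set (EuclideanSpace ℝ (Fin d)))
    (hXdef : X = Set.range e ∪ (-(Set.range e))) :
    {x : Fin (2 * d) → EuclideanSpace ℝ (Fin d) |
        (∀ i, x i ∈ X) ∧ posHull (Set.range x) = Set.univ}.ncard
      = (2 * d).factorial := by
  let b := Module.Basis.mk he hspan.ge
  have hX : X = Set.range b.signed := by rw [b.range_signed, Module.Basis.coe_mk, hXdef]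
  have hset : {x : Fin (2 * d) → EuclideanSpace ℝ (Fin d) |
      (∀ i, x i ∈ X) ∧ posHull (Set.range x) = Set.univ} =
      {x | Set.range x = Set.range b.signed} := by
    ext x
    rw [Set.mem_ofPred_eq, ← Set.range_subset_iff, hX]
    exact ⟨fun h ↦ (b.posHull_eq_univ_iff h.1).1 h.2,
      fun h ↦ ⟨h.le, (b.posHull_eq_univ_iff h.le).2 h⟩⟩
  rw [hset, ncard_setOf_range_eq b.signed_injective (by simp [two_mul]), Fintype.card_fin]
end

section
/- Let x₁, …, x_d ∈ ℝ^d be linearly independent and let v lie in the interior of the cone C = pos {x₁,…,x_d}. If y₁, …, y_d ∈ ℝ^d satisfy −v ∈ int pos {y₁,…,y_d}, then pos {x₁,…,x_d,y₁,…,y_d} = ℝ^d. -/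
open scoped BigOperators

/-- A point `z` is recovered as `t⁻¹ • (v + t • z) + t⁻¹ • (-v)`; for small `t > 0` the first
summand lies in `K` because `v` is an interior point, and the second because `-v ∈ K`. -/
theorem ConvexCone.eq_top_of_mem_interior_of_neg_mem {E : Type*} [AddCommGroup E] [Module ℝ E]
    [TopologicalSpace E] [IsTopologicalAddGroup E] [ContinuousSMul ℝ E] {K : ConvexCone ℝ E}
    {v : E} (hv : v ∈ interior (K : Set E)) (hnv : -v ∈ K) : K = ⊤ := by
  refine eq_top_iff.mpr fun z _ => ?_
  have hnear : Filter.Tendsto (fun t : ℝ => v + t • z) (nhdsWithin 0 (Set.Ioi 0)) (nhds v) := by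
    have hcont : Continuous (fun t : ℝ => v + t • z) := by fun_prop
    simpa using (hcont.tendsto 0).mono_left nhdsWithin_le_nhds
  obtain ⟨t, hvt, ht⟩ := ((hnear.eventually (mem_interior_iff_mem_nhds.mp hv)).and
    self_mem_nhdsWithin).exists
  have hdecomp : z = t⁻¹ • (v + t • z) + t⁻¹ • (-v) := by
    rw [smul_add, smul_smul, inv_mul_cancel₀ (ne_of_gt ht), one_smul, smul_neg]
    abel
  rw [hdecomp]
  have htinv : (0 : ℝ) < t⁻¹ := inv_pos.mpr ht
  exact K.add_mem (K.smul_mem htinv hvt) (K.smul_mem htinv hnv)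

section posHull

variable {d : ℕ}

theorem posHull_mono {A B : Set (EuclideanSpace ℝ (Fin d))} (h : A ⊆ B) :
    posHull A ⊆ posHull B := by
  rintro z ⟨n, c, f, hc, hf, rfl⟩
  exact ⟨n, c, f, hc, fun i => h (hf i), rfl⟩

theorem posHull_add {A : Set (EuclideanSpace ℝ (Fin d))} {a b : EuclideanSpace ℝ (Fin d)}
    (ha : a ∈ posHull A) (hb : b ∈ posHull A) : a + b ∈ posHull A := by
  obtain ⟨n, c, f, hc, hf, rfl⟩ := ha
  obtain ⟨m, c', f', hc', hf', rfl⟩ := hb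
  refine ⟨n + m, Fin.append c c', Fin.append f f', fun i => ?_, fun i => ?_, ?_⟩
  · exact Fin.addCases (by simpa only [Fin.append_left] using hc)
      (by simpa only [Fin.append_right] using hc') i
  · exact Fin.addCases (by simpa only [Fin.append_left] using hf)
      (by simpa only [Fin.append_right] using hf') i
  · simp only [Fin.sum_univ_add, Fin.append_left, Fin.append_right]

theorem posHull_smul {A : Set (EuclideanSpace ℝ (Fin d))} {a : EuclideanSpace ℝ (Fin d)}
    {t : ℝ} (ht : 0 ≤ t) (ha : a ∈ posHull A) : t • a ∈ posHull A := by
  obtain ⟨n, c, f, hc, hf, rfl⟩ := ha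
  refine ⟨n, fun i => t * c i, f, fun i => mul_nonneg ht (hc i), hf, ?_⟩
  simp only [Finset.smul_sum, smul_smul]

def posHullCone (A : Set (EuclideanSpace ℝ (Fin d))) : ConvexCone ℝ (EuclideanSpace ℝ (Fin d)) where
  carrier := posHull A
  smul_mem' _ hc _ ha := posHull_smul hc.le ha
  add_mem' _ ha _ hb := posHull_add ha hb

end posHull

theorem two_cones_span_general (d : ℕ) (x y : Fin d → EuclideanSpace ℝ (Fin d))
    (v : EuclideanSpace ℝ (Fin d))
    (hv : v ∈ interior (posHull (Set.range x)))
    (hw : -v ∈ interior (posHull (Set.range y))) :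
    posHull (Set.range x ∪ Set.range y) = Set.univ := by
  have hv' : v ∈ interior (posHullCone (Set.range x ∪ Set.range y) : Set _) :=
    interior_mono (posHull_mono Set.subset_union_left) hv
  have hnv : -v ∈ posHullCone (Set.range x ∪ Set.range y) :=
    posHull_mono Set.subset_union_right (interior_subset hw)
  have htop := ConvexCone.eq_top_of_mem_interior_of_neg_mem hv' hnv
  exact congrArg SetLike.coe htop

theorem two_cones_span (d : ℕ) (x y : Fin d → EuclideanSpace ℝ (Fin d))
    (hx : LinearIndependent ℝ x) (v : EuclideanSpace ℝ (Fin d))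
    (hv : v ∈ interior (posHull (Set.range x)))
    (hw : -v ∈ interior (posHull (Set.range y))) :
    posHull (Set.range x ∪ Set.range y) = Set.univ :=
  two_cones_span_general d x y v hv hw
end
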